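/- If cot²α + cot²β > 1 − 3(cot α · cot β)^(2/3) for positive reals α, β (angles of a triangle at the base), then the cubic y³ + y(cot²α + cot²β − 1) + 2 cot α cot β = 0 has exactly one real root; otherwise it has three real roots, two of which are positive and less than 1. -/
import Mathlib

set_option maxHeartbeats 1000000


open Real

noncomputable section

private lemma cot_pos' {x : ℝ} (hx : 0 < x) (hx' : x < π / 2) : 0 < Real.cot x := by
  rw [Real.cot_eq_cos_div_sin]
  have hc : 0 < Real.cos x := Real.cos_pos_of_mem_Ioo ⟨by linarith [Real.pi_pos], hx'⟩
  have hs : 0 < Real.sin x := Real.sin_pos_of_pos_of_lt_pi hx (by linarith [Real.pi_pos])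
  positivity

private lemma exists_root_cubic (p q : ℝ) : ∃ y : ℝ, y ^ 3 + p * y + q = 0 := by
  set M : ℝ := 1 + |p| + |q| with hM
  have hA := abs_nonneg p
  have hB := abs_nonneg q
  have hM1 : 1 ≤ M := by linarith
  have hM0 : (0:ℝ) ≤ M := by linarith
  have hcont : ContinuousOn (fun y : ℝ => y ^ 3 + p * y + q) (Set.Icc (-M) M) := by
    fun_prop
  have e1 : -(|p| * M) ≤ p * M := by
    have := mul_le_mul_of_nonneg_right (neg_abs_le p) hM0
    linarith
  have e1' : p * M ≤ |p| * M := mul_le_mul_of_nonneg_right (le_abs_self p) hM0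
  have e2 : -|q| ≤ q := neg_abs_le q
  have e2' : q ≤ |q| := le_abs_self q
  have e3 : |p| * M + |q| * M = M ^ 2 - M := by rw [hM]; ring
  have e4 : M ^ 2 ≤ M ^ 3 := by nlinarith
  have e5 : |q| ≤ |q| * M := le_mul_of_one_le_right hB hM1
  have hfneg : (-M) ^ 3 + p * (-M) + q ≤ 0 := by
    have h : (-M) ^ 3 + p * (-M) + q = -(M ^ 3) - p * M + q := by ring
    rw [h]; linarith
  have hfpos : 0 ≤ M ^ 3 + p * M + q := by linarith
  have := intermediate_value_Icc (by linarith : -M ≤ M) hcont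
  obtain ⟨y, _, hy⟩ := this ⟨hfneg, hfpos⟩
  exact ⟨y, hy⟩

/-- For acute base angles `α`, `β`: if `cot²α + cot²β > 1 − 3(cot α cot β)^(2/3)` the
cubic `y³ + y(cot²α + cot²β − 1) + 2 cot α cot β` has exactly one real root; otherwise
it has three real roots, two of which are positive and less than `1`. -/
theorem cubic_roots_of_cevian_equation (α β p q : ℝ)
    (hα : 0 < α) (hα' : α < π / 2) (hβ : 0 < β) (hβ' : β < π / 2)
    (hp : p = Real.cot α ^ 2 + Real.cot β ^ 2 - 1)
    (hq : q = 2 * Real.cot α * Real.cot β) :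
    (Real.cot α ^ 2 + Real.cot β ^ 2 >
        1 - 3 * (Real.cot α * Real.cot β) ^ ((2 : ℝ) / 3) →
      ∃! y : ℝ, y ^ 3 + p * y + q = 0) ∧
    (¬ (Real.cot α ^ 2 + Real.cot β ^ 2 >
        1 - 3 * (Real.cot α * Real.cot β) ^ ((2 : ℝ) / 3)) →
      ∃ y₀ y₁ y₂ : ℝ,
        (∀ y : ℝ, y ^ 3 + p * y + q = 0 ↔ y = y₀ ∨ y = y₁ ∨ y = y₂) ∧
        0 < y₁ ∧ y₁ < 1 ∧ 0 < y₂ ∧ y₂ < 1) := by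
  set a := Real.cot α with hadef
  set b := Real.cot β with hbdef
  have ha : 0 < a := cot_pos' hα hα'
  have hb : 0 < b := cot_pos' hβ hβ'
  have hab : 0 < a * b := mul_pos ha hb
  have hq0 : 0 < q := by rw [hq]; positivity
  set u : ℝ := (a * b) ^ ((1 : ℝ) / 3) with hudef
  have hu : 0 < u := Real.rpow_pos_of_pos hab _
  have hu3 : u ^ 3 = a * b := by
    rw [hudef, ← Real.rpow_natCast ((a*b) ^ ((1:ℝ)/3)) 3, ← Real.rpow_mul hab.le]
    norm_num
  have h23 : (a * b) ^ ((2 : ℝ) / 3) = u ^ 2 := by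
    rw [hudef, ← Real.rpow_natCast ((a*b) ^ ((1:ℝ)/3)) 2, ← Real.rpow_mul hab.le]
    norm_num
  have hqu : q = 2 * u ^ 3 := by rw [hq, hu3]; ring
  constructor
  · -- one real root
    intro hgt
    rw [h23] at hgt
    have hpu : -3 * u ^ 2 < p := by rw [hp]; linarith
    have hdisc : 0 < 4 * p ^ 3 + 27 * q ^ 2 := by
      have hid : 4 * p ^ 3 + 27 * q ^ 2
          = 4 * (p + 3 * u ^ 2) *
            ((p + 3 * u ^ 2 - 9 / 2 * u ^ 2) ^ 2 + 27 / 4 * u ^ 4) := by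
        rw [hqu]; ring
      have hA : (0:ℝ) < 27 / 4 * u ^ 4 := by positivity
      rw [hid]
      exact mul_pos (by linarith)
        (by nlinarith [sq_nonneg (p + 3 * u ^ 2 - 9 / 2 * u ^ 2)])
    obtain ⟨y, hy⟩ := exists_root_cubic p q
    refine ⟨y, hy, fun z hz => ?_⟩
    by_contra hne
    have hsub : (z - y) * (z ^ 2 + z * y + y ^ 2 + p) = 0 := by linear_combination hz - hy
    have hzy : z - y ≠ 0 := sub_ne_zero.mpr hne
    have hp2 : z ^ 2 + z * y + y ^ 2 + p = 0 := by
      rcases mul_eq_zero.mp hsub with h | h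
      · exact absurd h hzy
      · exact h
    have hpval : p = -(z ^ 2 + z * y + y ^ 2) := by linarith
    have hqval : q = z ^ 2 * y + z * y ^ 2 := by linear_combination hy - y * hp2
    have hkey : 4 * p ^ 3 + 27 * q ^ 2
        = -((z - y) * (2 * z + y) * (z + 2 * y)) ^ 2 := by
      rw [hpval, hqval]; ring
    nlinarith [sq_nonneg ((z - y) * (2 * z + y) * (z + 2 * y))]
  · -- three real roots
    intro hle
    rw [not_lt, h23] at hle
    have hpu : p ≤ -3 * u ^ 2 := by rw [hp]; linarith
    have hu2 : 0 < u ^ 2 := by positivity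
    have hpneg : p < 0 := by linarith
    set m : ℝ := Real.sqrt (-p / 3) with hmdef
    have hm2 : m ^ 2 = -p / 3 := Real.sq_sqrt (by linarith)
    have hm : 0 < m := Real.sqrt_pos.mpr (by linarith)
    have hum : u ≤ m := by
      by_contra h
      push_neg at h
      have h2 : m * m < u * u := mul_self_lt_mul_self hm.le h
      have h3 : m * m = m ^ 2 := by ring
      have h4 : u * u = u ^ 2 := by ring
      linarith [hm2, hpu]
    have hq2m : q ≤ 2 * m ^ 3 := by
      rw [hqu]
      have := pow_le_pow_left₀ hu.le hum 3
      linarith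
    -- find the negative root y₀ in [-2, 0]
    have hcont : ContinuousOn (fun y : ℝ => y ^ 3 + p * y + q) (Set.Icc (-2) 0) := by
      fun_prop
    have hf2 : (-2:ℝ) ^ 3 + p * (-2) + q ≤ 0 := by
      rw [hp, hq]; linarith [sq_nonneg (a - b), sq_nonneg (a + b)]
    have hf0 : (0:ℝ) ≤ 0 ^ 3 + p * 0 + q := by simpa using hq0.le
    obtain ⟨y₀, hy₀mem, hroot⟩ :=
      intermediate_value_Icc (by norm_num : (-2:ℝ) ≤ 0) hcont ⟨hf2, hf0⟩
    simp only at hroot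
    have hy₀neg : y₀ < 0 := by
      rcases lt_or_eq_of_le hy₀mem.2 with h | h
      · exact h
      · exfalso; rw [h] at hroot; simp at hroot; linarith
    have hroot' : y₀ ^ 3 - 3 * m ^ 2 * y₀ + q = 0 := by
      have hpm : p = -3 * m ^ 2 := by linarith [hm2]
      linear_combination hroot - y₀ * hpm
    have hfac : (y₀ - m) ^ 2 * (y₀ + 2 * m) = 2 * m ^ 3 - q := by
      linear_combination hroot'
    have hy₀ge : -2 * m ≤ y₀ := by
      by_contra h
      push_neg at h
      have hsq : 0 < (m - y₀) ^ 2 := pow_pos (by linarith) 2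
      have hneg : 0 < (m - y₀) ^ 2 * (-(y₀ + 2 * m)) :=
        mul_pos hsq (by linarith)
      have hfac' : (m - y₀) ^ 2 * (-(y₀ + 2 * m)) = -(2 * m ^ 3 - q) := by
        linear_combination -hfac
      linarith [hfac', hq2m]
    have hgy0 : 0 < y₀ ^ 2 + p := by
      by_contra h
      push_neg at h
      have h2 : 0 ≤ -y₀ * -(y₀ ^ 2 + p) := mul_nonneg (by linarith) (by linarith)
      have h3 : -y₀ * -(y₀ ^ 2 + p) = y₀ ^ 3 + p * y₀ := by ring
      linarith [hroot, hq0]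
    have hD : 0 ≤ -3 * y₀ ^ 2 - 4 * p := by
      have h2 : 0 ≤ (2 * m - y₀) * (2 * m + y₀) :=
        mul_nonneg (by linarith) (by linarith)
      have h3 : (2 * m - y₀) * (2 * m + y₀) = 4 * m ^ 2 - y₀ ^ 2 := by ring
      linarith [hm2]
    set s : ℝ := Real.sqrt (-3 * y₀ ^ 2 - 4 * p) with hsdef
    have hs0 : 0 ≤ s := Real.sqrt_nonneg _
    have hs2 : s ^ 2 = -3 * y₀ ^ 2 - 4 * p := Real.sq_sqrt hD
    set y₁ : ℝ := (-y₀ - s) / 2 with hy₁def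
    set y₂ : ℝ := (-y₀ + s) / 2 with hy₂def
    have factor : ∀ y : ℝ, y ^ 3 + p * y + q = (y - y₀) * (y - y₁) * (y - y₂) := by
      intro y
      rw [hy₁def, hy₂def]
      linear_combination hroot + ((y - y₀) / 4) * hs2
    -- bounds
    have hslt : s < -y₀ := by
      by_contra h
      push_neg at h
      have h2 : -y₀ * -y₀ ≤ s * s := mul_self_le_mul_self (by linarith) h
      have h3 : -y₀ * -y₀ = y₀ ^ 2 := by ring
      have h4 : s * s = s ^ 2 := by ring
      linarith [hs2, hgy0]
    have hy₁pos : 0 < y₁ := by rw [hy₁def]; linarith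
    have hy₂pos : 0 < y₂ := by rw [hy₂def]; linarith
    have h1pq : 0 < 1 + p + q := by rw [hp, hq]; linarith [sq_nonneg a, sq_nonneg b, hab]
    have hkey2 : (1 - y₀) * (1 + y₀ + y₀ ^ 2 + p) = 1 + p + q := by
      linear_combination -hroot
    have hg1 : 0 < 1 + y₀ + y₀ ^ 2 + p := by
      by_contra h
      push_neg at h
      have h2 : (1 - y₀) * (1 + y₀ + y₀ ^ 2 + p) ≤ 0 :=
        mul_nonpos_iff.mpr (Or.inl ⟨by linarith, h⟩)
      linarith
    have hmlt : m < 1 := by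
      have h2 : m ^ 2 < 1 := by rw [hm2, hp]; linarith [sq_nonneg a, sq_nonneg b]
      by_contra h
      push_neg at h
      have h3 : (1:ℝ) * 1 ≤ m * m := mul_self_le_mul_self (by norm_num) h
      have h4 : m * m = m ^ 2 := by ring
      linarith
    have hy₀gt : -2 < y₀ := by linarith
    have hslt1 : s < 2 + y₀ := by
      by_contra h
      push_neg at h
      have h2 : (2 + y₀) * (2 + y₀) ≤ s * s := mul_self_le_mul_self (by linarith) h
      have h3 : (2 + y₀) * (2 + y₀) = 4 + 4 * y₀ + y₀ ^ 2 := by ring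
      have h4 : s * s = s ^ 2 := by ring
      linarith [hs2, hg1]
    have hy₂lt : y₂ < 1 := by rw [hy₂def]; linarith
    have hy₁lt : y₁ < 1 := by rw [hy₁def]; linarith
    refine ⟨y₀, y₁, y₂, fun y => ?_, hy₁pos, hy₁lt, hy₂pos, hy₂lt⟩
    rw [factor y]
    constructor
    · intro h
      rcases mul_eq_zero.mp h with h | h
      · rcases mul_eq_zero.mp h with h | h
        · exact Or.inl (by linarith [sub_eq_zero.mp h])
        · exact Or.inr (Or.inl (sub_eq_zero.mp h))
      · exact Or.inr (Or.inr (sub_eq_zero.mp h))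
    · rintro (rfl | rfl | rfl) <;> ring
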